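/- arXiv:1804.08991 — 2 statements merged into one kernel-verified Lean document; each statement's English description precedes it below -/
import Mathlib

section
/- Let k \ge 15 and let H be a traceable graph of order at most 3k - 42 with a Hamiltonian path from a to b. Let K_k(H) be obtained from the disjoint union of the complete graph K_k and H by adding edges au and bv for two distinct vertices u, v of K_k. Then K_k(H) is traceable and \gamma_g(K_k(H)) \le \lceil n(K_k(H))/2 \rceil. -/
open Finset
open scoped Classical

variable {V : Type*}

/-- The closed neighborhood `N[v]` of a vertex, as a finset. -/
noncomputable def closedNbhd [Fintype V] (G : SimpleGraph V) (v : V) : Finset V :=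
  Finset.univ.filter (fun u => u = v ∨ G.Adj v u)

/-- The legal moves in the domination game when `D` is the set of dominated vertices:
vertices whose closed neighborhood is not already dominated. -/
noncomputable def legalMoves [Fintype V] (G : SimpleGraph V) (D : Finset V) : Finset V :=
  Finset.univ.filter (fun v => ¬ closedNbhd G v ⊆ D)

lemma legalMoves_nonempty [Fintype V] (G : SimpleGraph V) {D : Finset V}
    (h : D ≠ Finset.univ) : (legalMoves G D).Nonempty := by
  obtain ⟨v, hv⟩ : ∃ v, v ∉ D := by
    by_contra hc
    push_neg at hc
    exact h (Finset.eq_univ_iff_forall.2 hc)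
  refine ⟨v, ?_⟩
  simp only [legalMoves, Finset.mem_filter, Finset.mem_univ, true_and]
  intro hsub
  exact hv (hsub (by simp [closedNbhd]))

lemma card_lt_of_legal [Fintype V] (G : SimpleGraph V) {D : Finset V} {v : V}
    (hv : v ∈ legalMoves G D) :
    (Finset.univ \ (D ∪ closedNbhd G v)).card < (Finset.univ \ D).card := by
  simp only [legalMoves, Finset.mem_filter, Finset.mem_univ, true_and] at hv
  obtain ⟨u, hu1, hu2⟩ := Finset.not_subset.1 hv
  apply Finset.card_lt_card
  constructor
  · exact Finset.sdiff_subset_sdiff (le_refl _) Finset.subset_union_left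
  · intro hsub
    have := hsub (Finset.mem_sdiff.2 ⟨Finset.mem_univ u, hu2⟩)
    simp only [Finset.mem_sdiff, Finset.mem_union] at this
    exact this.2 (Or.inr hu1)

/-- Optimal number of moves in the domination game on the partially dominated graph `G|D`;
`turn = true` means Dominator (the minimizer) moves next, `turn = false` means Staller
(the maximizer) moves next.  Every move must dominate a not-yet-dominated vertex and the
game ends when all vertices are dominated. -/
noncomputable def gameVal [Fintype V] (G : SimpleGraph V) : Bool → Finset V → ℕ
  | turn, D =>
    if h : D = Finset.univ then 0
    else
      have hne : (legalMoves G D).attach.Nonempty :=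
        (Finset.attach_nonempty_iff).2 (legalMoves_nonempty G h)
      if turn then
        1 + (legalMoves G D).attach.inf' hne
          (fun v => gameVal G false (D ∪ closedNbhd G v.1))
      else
        1 + (legalMoves G D).attach.sup' hne
          (fun v => gameVal G true (D ∪ closedNbhd G v.1))
  termination_by turn D => (Finset.univ \ D).card
  decreasing_by all_goals exact card_lt_of_legal G v.2

/-- The Dominator-start game domination number `γ_g(G|S)` of the partially dominated graph. -/
noncomputable def gammaG [Fintype V] (G : SimpleGraph V) (S : Finset V) : ℕ :=
  gameVal G true S

/-- The Staller-start game domination number `γ_g'(G|S)` of the partially dominated graph. -/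
noncomputable def gammaG' [Fintype V] (G : SimpleGraph V) (S : Finset V) : ℕ :=
  gameVal G false S

/-- Optimal number of (non-pass) moves in the Staller `p`-pass domination game on `G|D`:
the Dominator-start game in which Staller may additionally pass at most `p` times. -/
noncomputable def passVal [Fintype V] (G : SimpleGraph V) : Bool → ℕ → Finset V → ℕ
  | turn, p, D =>
    if h : D = Finset.univ then 0
    else
      have hne : (legalMoves G D).attach.Nonempty :=
        (Finset.attach_nonempty_iff).2 (legalMoves_nonempty G h)
      if turn then
        1 + (legalMoves G D).attach.inf' hne
          (fun v => passVal G false p (D ∪ closedNbhd G v.1))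
      else
        match p with
        | 0 =>
          1 + (legalMoves G D).attach.sup' hne
            (fun v => passVal G true 0 (D ∪ closedNbhd G v.1))
        | q + 1 =>
          max
            (1 + (legalMoves G D).attach.sup' hne
              (fun v => passVal G true (q + 1) (D ∪ closedNbhd G v.1)))
            (passVal G true q D)
  termination_by turn p D => ((Finset.univ \ D).card, p)
  decreasing_by
  · exact Prod.Lex.left _ _ (card_lt_of_legal G v.2)
  · exact Prod.Lex.left _ _ (card_lt_of_legal G v.2)
  · exact Prod.Lex.left _ _ (card_lt_of_legal G v.2)
  · exact Prod.Lex.right _ (Nat.lt_succ_self q)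

/-- `γ_g^{St,p}(G)`: the Staller `p`-pass game domination number. -/
noncomputable def gammaPass [Fintype V] (G : SimpleGraph V) (p : ℕ) : ℕ :=
  passVal G true p ∅

/-- Value (in `ℤ`) of the Dominator `1`-pass game on `G|D` in which the payoff is the
number of moves made minus the number of passes used by Dominator; Dominator minimizes,
Staller maximizes.  `turn = true` means it is Dominator's move, `pass = true` means the
pass is still available to Dominator. -/
noncomputable def domPassVal [Fintype V] (G : SimpleGraph V) : Bool → Bool → Finset V → ℤ
  | turn, pass, D =>
    if h : D = Finset.univ then 0
    else
      have hne : (legalMoves G D).attach.Nonempty :=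
        (Finset.attach_nonempty_iff).2 (legalMoves_nonempty G h)
      if turn then
        match pass with
        | false =>
          1 + (legalMoves G D).attach.inf' hne
            (fun v => domPassVal G false false (D ∪ closedNbhd G v.1))
        | true =>
          min
            (1 + (legalMoves G D).attach.inf' hne
              (fun v => domPassVal G false true (D ∪ closedNbhd G v.1)))
            (domPassVal G false false D - 1)
      else
        1 + (legalMoves G D).attach.sup' hne
          (fun v => domPassVal G true pass (D ∪ closedNbhd G v.1))
  termination_by turn pass D => ((Finset.univ \ D).card, pass.toNat)
  decreasing_by
  · exact Prod.Lex.left _ _ (card_lt_of_legal G v.2)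
  · exact Prod.Lex.left _ _ (card_lt_of_legal G v.2)
  · exact Prod.Lex.right _ (by norm_num)
  · exact Prod.Lex.left _ _ (card_lt_of_legal G v.2)

/-- A graph is a double-Staller graph if, in the Dominator `1`-pass game, Staller has a
strategy forcing at least `γ_g(G) + p` moves, where `p ∈ {0,1}` is the number of passes
used by Dominator.  Equivalently, the optimal value of "moves minus Dominator passes" in
that game is at least `γ_g(G)`. -/
def IsDoubleStaller [Fintype V] (G : SimpleGraph V) : Prop :=
  (gammaG G ∅ : ℤ) ≤ domPassVal G true true ∅

/-- An edge cut of `G`: a set of edges whose removal disconnects `G`. -/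
def IsEdgeCut (G : SimpleGraph V) (C : Set (Sym2 V)) : Prop :=
  C ⊆ G.edgeSet ∧ ¬ (G.deleteEdges C).Connected

/-- A minimal edge cut: no proper subset is an edge cut. -/
def IsMinimalEdgeCut (G : SimpleGraph V) (C : Set (Sym2 V)) : Prop :=
  IsEdgeCut G C ∧ ∀ C' ⊂ C, ¬ IsEdgeCut G C'

/-- A minimum edge cut: an edge cut of the smallest possible cardinality (this
cardinality is the edge-connectivity `κ'(G)`). -/
def IsMinimumEdgeCut (G : SimpleGraph V) (C : Set (Sym2 V)) : Prop :=
  IsEdgeCut G C ∧ ∀ C', IsEdgeCut G C' → C.ncard ≤ C'.ncard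

/-- A graph is traceable if it contains a Hamiltonian path. -/
def Traceable (G : SimpleGraph V) : Prop :=
  ∃ (a b : V) (p : G.Walk a b), p.IsHamiltonian
/-- The disjoint union of two graphs. -/
def sumGraph {V₁ V₂ : Type*} (G₁ : SimpleGraph V₁) (G₂ : SimpleGraph V₂) :
    SimpleGraph (V₁ ⊕ V₂) :=
  SimpleGraph.fromRel (fun a b =>
    match a, b with
    | Sum.inl u, Sum.inl w => G₁.Adj u w
    | Sum.inr u, Sum.inr w => G₂.Adj u w
    | _, _ => False)

/-- The graph `H_{x,3}`: two disjoint copies of `H` (the first copy on `Sum.inl ∘ Sum.inl`,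
the second on `Sum.inl ∘ Sum.inr`) joined by a path of length 3 from `x` to its copy `x'`
through the two internal vertices `y = Sum.inr 0` (adjacent to `x`) and
`y' = Sum.inr 1` (adjacent to `x'`). -/
def Hx3 (H : SimpleGraph V) (x : V) : SimpleGraph ((V ⊕ V) ⊕ Fin 2) :=
  SimpleGraph.fromRel (fun a b =>
    match a, b with
    | Sum.inl (Sum.inl u), Sum.inl (Sum.inl w) => H.Adj u w
    | Sum.inl (Sum.inr u), Sum.inl (Sum.inr w) => H.Adj u w
    | Sum.inl (Sum.inl u), Sum.inr i => u = x ∧ i = 0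
    | Sum.inl (Sum.inr u), Sum.inr i => u = x ∧ i = 1
    | Sum.inr i, Sum.inr j => i ≠ j
    | _, _ => False)

/-- The tree `T_n`: a star `K_{1,n}` with center `Sum.inl ()`, support vertices
`Sum.inr (Sum.inl i)`, and four leaves `Sum.inr (Sum.inr (i, l))` attached to each
support vertex. -/
def Tn (n : ℕ) : SimpleGraph (Unit ⊕ (Fin n ⊕ Fin n × Fin 4)) :=
  SimpleGraph.fromRel (fun a b =>
    match a, b with
    | Sum.inl _, Sum.inr (Sum.inl _) => True
    | Sum.inr (Sum.inl i), Sum.inr (Sum.inr jl) => i = jl.1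
    | _, _ => False)

/-- The graph `K_k(H)`: the disjoint union of the complete graph `K_k` (on `Fin k`,
embedded via `Sum.inl`) and the graph `H` (embedded via `Sum.inr`), together with the
two extra edges `au` and `bv`. -/
def KkH {W : Type*} (k : ℕ) (H : SimpleGraph W) (u v : Fin k) (a b : W) :
    SimpleGraph (Fin k ⊕ W) :=
  SimpleGraph.fromRel (fun s t =>
    match s, t with
    | Sum.inl i, Sum.inl j => i ≠ j
    | Sum.inr w₁, Sum.inr w₂ => H.Adj w₁ w₂
    | Sum.inl i, Sum.inr w => (i = u ∧ w = a) ∨ (i = v ∧ w = b)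
    | _, _ => False)

/-!
Listing the vertices of `K_k` so as to end at `u` and then following the path of `H` from `a`
gives a Hamiltonian path. For the game, `u` together with every third vertex of the path of `H`
is a dominating set `F` with `|F| ≤ 1 + ⌈n(H)/3⌉`; Dominator, playing the vertices of `F` in
turn, ends the game within `2|F|` moves, and `n(H) ≤ 3k - 42` makes this at most
`⌈(k + n(H))/2⌉`.
-/

section DominationGame

variable [Fintype V] (G : SimpleGraph V)

lemma mem_closedNbhd {v x : V} : x ∈ closedNbhd G v ↔ x = v ∨ G.Adj v x := by
  simp [closedNbhd]

lemma mem_closedNbhd_map {V' : Type*} {G' : SimpleGraph V'} [Fintype V'] (φ : G →g G') {v x : V}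
    (hx : x ∈ closedNbhd G v) : φ x ∈ closedNbhd G' (φ v) := by
  rw [mem_closedNbhd] at hx ⊢
  exact hx.imp (congrArg φ) φ.map_adj

lemma gameVal_univ (turn : Bool) : gameVal G turn univ = 0 := by
  rw [gameVal]
  simp

lemma gameVal_true_le {D : Finset V} {v : V} (hv : v ∈ legalMoves G D) :
    gameVal G true D ≤ 1 + gameVal G false (D ∪ closedNbhd G v) := by
  have hD : D ≠ univ := by
    rintro rfl
    simp [legalMoves] at hv
  rw [gameVal, dif_neg hD, if_pos rfl]
  exact Nat.add_le_add_left (Finset.inf'_le _ (Finset.mem_attach _ ⟨v, hv⟩)) 1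

lemma gameVal_false_le {D : Finset V} {n : ℕ}
    (h : ∀ v ∈ legalMoves G D, gameVal G true (D ∪ closedNbhd G v) ≤ n) :
    gameVal G false D ≤ 1 + n := by
  by_cases hD : D = univ
  · simp [hD, gameVal_univ]
  rw [gameVal, dif_neg hD, if_neg Bool.false_ne_true]
  exact Nat.add_le_add_left (Finset.sup'_le _ _ fun v _ => h v.1 v.2) 1

/-- Dominator can play the vertices of a dominating set `F` one by one, each of them a legal
move until everything is dominated; Staller's moves only speed this up. -/
theorem gameVal_le_two_mul_card (F D : Finset V)
    (hF : ∀ x ∉ D, ∃ f ∈ F, x ∈ closedNbhd G f) :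
    gameVal G true D ≤ 2 * #F ∧ gameVal G false D ≤ 2 * #F + 1 := by
  by_cases hD : D = univ
  · subst hD
    simp [gameVal_univ]
  obtain ⟨f, hfF, hf⟩ : ∃ f ∈ F, ¬ closedNbhd G f ⊆ D := by
    obtain ⟨x, hx⟩ := by simpa [eq_univ_iff_forall] using hD
    obtain ⟨f, hfF, hxf⟩ := hF x hx
    exact ⟨f, hfF, fun h => hx (h hxf)⟩
  have hfD : f ∈ legalMoves G D := by simpa [legalMoves] using hf
  have hStaller : gameVal G false D ≤ 1 + 2 * #F := by
    refine gameVal_false_le G fun v hv => ?_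
    refine (gameVal_le_two_mul_card F (D ∪ closedNbhd G v) fun x hx => ?_).1
    exact hF x fun h => hx (Finset.mem_union_left _ h)
  have hDominator : gameVal G false (D ∪ closedNbhd G f) ≤ 2 * #(F.erase f) + 1 := by
    refine (gameVal_le_two_mul_card (F.erase f) (D ∪ closedNbhd G f) fun x hx => ?_).2
    obtain ⟨g, hgF, hxg⟩ := hF x fun h => hx (Finset.mem_union_left _ h)
    have hgf : g ≠ f := by
      rintro rfl
      exact hx (Finset.mem_union_right _ hxg)
    exact ⟨g, Finset.mem_erase.2 ⟨hgf, hgF⟩, hxg⟩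
  have hcard : #(F.erase f) + 1 = #F := Finset.card_erase_add_one hfF
  have := gameVal_true_le G hfD
  omega
termination_by #(univ \ D)
decreasing_by all_goals exact card_lt_of_legal G ‹_›

theorem gammaG_le_two_mul_card {F : Finset V} (hF : ∀ x, ∃ f ∈ F, x ∈ closedNbhd G f) :
    gammaG G ∅ ≤ 2 * #F :=
  (gameVal_le_two_mul_card G F ∅ fun x _ => hF x).1

/-- The witness takes every third vertex, starting from the second one. -/
theorem exists_card_le_dominating_of_isChain :
    ∀ l : List V, l.IsChain G.Adj →
      ∃ S : Finset V, #S ≤ (l.length + 2) / 3 ∧ ∀ x ∈ l, ∃ s ∈ S, x ∈ closedNbhd G s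
  | [], _ => ⟨∅, by simp⟩
  | [x], _ => ⟨{x}, by simp [mem_closedNbhd]⟩
  | [x, y], h => ⟨{x}, by simp [mem_closedNbhd, h.rel]⟩
  | x :: y :: z :: l, h => by
    obtain ⟨S, hS, hSl⟩ := exists_card_le_dominating_of_isChain l h.of_cons.of_cons.of_cons
    refine ⟨insert y S, ?_, ?_⟩
    · have := Finset.card_insert_le y S
      simp only [List.length_cons]
      omega
    · simp only [List.mem_cons, Finset.mem_insert, exists_eq_or_imp, mem_closedNbhd]
      rintro w (rfl | rfl | rfl | hw)
      · exact Or.inl (Or.inr h.rel.symm)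
      · exact Or.inl (Or.inl rfl)
      · exact Or.inl (Or.inr h.of_cons.rel)
      · exact Or.inr (by simpa only [mem_closedNbhd] using hSl w hw)

end DominationGame

section Traceable

open SimpleGraph

theorem exists_isHamiltonian_top_walk_to [Fintype V] (u : V) :
    ∃ (x : V) (q : (⊤ : SimpleGraph V).Walk x u), q.IsHamiltonian := by
  set l := u :: (univ.erase u).toList
  have hnd : l.Nodup := List.nodup_cons.2 ⟨by simp, Finset.nodup_toList _⟩
  have hchain : l.IsChain (⊤ : SimpleGraph V).Adj := (hnd.imp id).isChain
  have hq : (Walk.ofSupport l (List.cons_ne_nil _ _) hchain).IsHamiltonian := fun x => by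
    rw [Walk.support_ofSupport]
    refine List.count_eq_one_of_mem hnd ?_
    by_cases hx : x = u <;> simp [l, hx]
  refine ⟨_, (Walk.ofSupport l (List.cons_ne_nil _ _) hchain).reverse, fun x => ?_⟩
  have := hq x
  rwa [← List.count_reverse, ← Walk.support_reverse] at this

theorem traceable_sum_of_isHamiltonian {α β : Type*} {G₁ : SimpleGraph α} {G₂ : SimpleGraph β}
    {G : SimpleGraph (α ⊕ β)} (φ₁ : G₁ →g G) (φ₂ : G₂ →g G) (h₁ : ⇑φ₁ = Sum.inl)
    (h₂ : ⇑φ₂ = Sum.inr) {x y : α} {z w : β} {q₁ : G₁.Walk x y} {q₂ : G₂.Walk z w}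
    (hq₁ : q₁.IsHamiltonian) (hq₂ : q₂.IsHamiltonian) (h : G.Adj (φ₁ y) (φ₂ z)) :
    Traceable G := by
  refine ⟨_, _, (q₁.map φ₁).append (.cons h (q₂.map φ₂)), ?_⟩
  have hsupp : ((q₁.map φ₁).append (.cons h (q₂.map φ₂))).support =
      q₁.support.map Sum.inl ++ q₂.support.map Sum.inr := by
    rw [Walk.support_append, Walk.support_cons, List.tail_cons, Walk.support_map,
      Walk.support_map, h₁, h₂]
  have hnodup : (q₁.support.map Sum.inl ++ q₂.support.map Sum.inr).Nodup :=
    (hq₁.isPath.support_nodup.map Sum.inl_injective).append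
      (hq₂.isPath.support_nodup.map Sum.inr_injective) (by simp [List.disjoint_left])
  have hmem : ∀ c, c ∈ q₁.support.map Sum.inl ++ q₂.support.map Sum.inr := by
    rintro (c | c) <;> simp [hq₁.mem_support, hq₂.mem_support]
  rw [← hsupp] at hnodup hmem
  convert (Walk.IsPath.mk' hnodup).isHamiltonian_of_mem hmem

end Traceable

section KkH

variable {W : Type*} (k : ℕ) (H : SimpleGraph W) (u v : Fin k) (a b : W)

def KkH.inlHom : (⊤ : SimpleGraph (Fin k)) →g KkH k H u v a b where
  toFun := Sum.inl
  map_rel' h := by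
    simp only [KkH, SimpleGraph.fromRel_adj]
    exact ⟨by simpa using h.ne, Or.inl h.ne⟩

def KkH.inrHom : H →g KkH k H u v a b where
  toFun := Sum.inr
  map_rel' h := by
    simp only [KkH, SimpleGraph.fromRel_adj]
    exact ⟨by simpa using h.ne, Or.inl h⟩

lemma KkH_adj_u_a : (KkH k H u v a b).Adj (Sum.inl u) (Sum.inr a) := by
  simp only [KkH, SimpleGraph.fromRel_adj]
  exact ⟨by simp, Or.inl (by simp)⟩

lemma dominating_KkH_of_dominating [Fintype W] {S : Finset W}
    (hS : ∀ w, ∃ s ∈ S, w ∈ closedNbhd H s) :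
    ∀ x, ∃ f ∈ insert (Sum.inl u) (S.map .inr), x ∈ closedNbhd (KkH k H u v a b) f := by
  rintro (i | w)
  · refine ⟨_, Finset.mem_insert_self _ _, ?_⟩
    rw [mem_closedNbhd]
    by_cases hi : i = u
    · exact Or.inl (congrArg _ hi)
    · exact Or.inr ((KkH.inlHom k H u v a b).map_adj (Ne.symm hi))
  · obtain ⟨s, hsS, hws⟩ := hS w
    exact ⟨_, Finset.mem_insert_of_mem (Finset.mem_map_of_mem _ hsS),
      mem_closedNbhd_map H (KkH.inrHom k H u v a b) hws⟩

end KkH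

theorem stmt13_general {W : Type*} [Fintype W] (k : ℕ) (hk : 15 ≤ k)
    (H : SimpleGraph W) (a b : W) (p : H.Walk a b) (hp : p.IsHamiltonian)
    (hW : Fintype.card W ≤ 3 * k - 42) (u v : Fin k) :
    Traceable (KkH k H u v a b) ∧
    gammaG (KkH k H u v a b) ∅ ≤ (Fintype.card (Fin k ⊕ W) + 1) / 2 := by
  obtain ⟨_, _, hq⟩ := exists_isHamiltonian_top_walk_to u
  refine ⟨traceable_sum_of_isHamiltonian (KkH.inlHom k H u v a b) (KkH.inrHom k H u v a b)
    rfl rfl hq hp (KkH_adj_u_a k H u v a b), ?_⟩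
  obtain ⟨S, hS, hSdom⟩ := exists_card_le_dominating_of_isChain H p.support p.isChain_adj_support
  have hgame := gammaG_le_two_mul_card _
    (dominating_KkH_of_dominating k H u v a b fun w => hSdom w (hp.mem_support w))
  have hF := Finset.card_insert_le (Sum.inl u) (S.map .inr)
  rw [Finset.card_map] at hF
  rw [hp.length_support] at hS
  rw [Fintype.card_sum, Fintype.card_fin]
  omega

/-- For `k ≥ 15` and a traceable graph `H` of order at most `3k - 42` with a Hamiltonian
path from `a` to `b`, the graph `K_k(H)` (obtained from the disjoint union of `K_k` and
`H` by adding the edges `au` and `bv` for distinct `u, v` in `K_k`) is traceable and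
satisfies `γ_g(K_k(H)) ≤ ⌈n(K_k(H))/2⌉`. -/
theorem stmt13 {W : Type*} [Fintype W] (k : ℕ) (hk : 15 ≤ k)
    (H : SimpleGraph W) (a b : W) (p : H.Walk a b) (hp : p.IsHamiltonian)
    (hW : Fintype.card W ≤ 3 * k - 42) (u v : Fin k) (huv : u ≠ v) :
    Traceable (KkH k H u v a b) ∧
    gammaG (KkH k H u v a b) ∅ ≤ (Fintype.card (Fin k ⊕ W) + 1) / 2 :=
  stmt13_general k hk H a b p hp hW u v
end

section
/- For the graph G = H_{x,3} built from a double-Staller graph H with k even, \gamma_g(H|x) = \gamma_g(H) = k+1 and \gamma_g'(H|x) = \gamma_g'(H) = k, Dominator has a strategy in the Dominator-start game on G - e (where e = xy) guaranteeing the game ends in at most 2k + 1 moves; namely, start with y' and thereafter respond in the same component (H or H'|x') as Staller's previous move. -/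
open Finset
open scoped Classical

variable {V : Type*}

/-!
Dominator opens with `y'`, which dominates `y`, `y'` and `x'`. Once `xy` is deleted no edge
joins the first copy of `H` to the rest of the graph, and the rest, with `y`, `y'`, `x'`
dominated, is the game on `H|x`. Dominator then answers every Staller move on the side where it
was played, so each side lasts at most its Staller-start length rounded up to an even number:
`γ_g'(H) = k` and `γ_g'(H|x) = k`, as `k` is even. Altogether at most `1 + 2k` moves are played.
-/

namespace Finset

lemma inf'_attach {α β : Type*} [SemilatticeInf β] (s : Finset α) (h : s.attach.Nonempty)
    (g : α → β) : s.attach.inf' h (fun v => g v.1) = s.inf' (attach_nonempty_iff.1 h) g :=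
  le_antisymm (le_inf' _ _ fun b hb => inf'_le _ (mem_attach _ ⟨b, hb⟩))
    (le_inf' _ _ fun b _ => inf'_le _ b.2)

lemma sup'_attach {α β : Type*} [SemilatticeSup β] (s : Finset α) (h : s.attach.Nonempty)
    (g : α → β) : s.attach.sup' h (fun v => g v.1) = s.sup' (attach_nonempty_iff.1 h) g :=
  inf'_attach (β := βᵒᵈ) s h g

end Finset

namespace DominationGame

section Game

variable [Fintype V] (G : SimpleGraph V)

@[simp]
lemma mem_closedNbhd {v w : V} : w ∈ closedNbhd G v ↔ w = v ∨ G.Adj v w := by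
  simp [closedNbhd]

@[simp]
lemma mem_legalMoves {D : Finset V} {v : V} :
    v ∈ legalMoves G D ↔ ¬ closedNbhd G v ⊆ D := by
  simp [legalMoves]

lemma mem_legalMoves_empty (v : V) : v ∈ legalMoves G ∅ :=
  (mem_legalMoves G).2 fun h => Finset.notMem_empty v (h (by simp))

lemma legalMoves_anti {D D' : Finset V} (h : D ⊆ D') : legalMoves G D' ⊆ legalMoves G D :=
  fun _ hv => (mem_legalMoves G).2 fun hD => (mem_legalMoves G).1 hv (hD.trans h)

lemma ne_univ_of_mem_legalMoves {D : Finset V} {v : V} (hv : v ∈ legalMoves G D) :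
    D ≠ Finset.univ := fun h => (mem_legalMoves G).1 hv (h ▸ Finset.subset_univ _)

lemma ssubset_union_closedNbhd {D : Finset V} {v : V} (hv : v ∈ legalMoves G D) :
    D ⊂ D ∪ closedNbhd G v :=
  Finset.ssubset_iff_subset_ne.2
    ⟨Finset.subset_union_left, fun h => (mem_legalMoves G).1 hv (h ▸ Finset.subset_union_right)⟩

lemma gameVal_univ (t : Bool) : gameVal G t Finset.univ = 0 := by
  rw [gameVal, dif_pos rfl]

lemma gameVal_true_of_ne_univ {D : Finset V} (hD : D ≠ Finset.univ) :
    gameVal G true D = 1 + (legalMoves G D).inf' (legalMoves_nonempty G hD)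
      (fun v => gameVal G false (D ∪ closedNbhd G v)) := by
  rw [gameVal, dif_neg hD, if_pos rfl]
  exact congrArg (1 + ·) (Finset.inf'_attach _ _ fun v => gameVal G false (D ∪ closedNbhd G v))

lemma gameVal_false_of_ne_univ {D : Finset V} (hD : D ≠ Finset.univ) :
    gameVal G false D = 1 + (legalMoves G D).sup' (legalMoves_nonempty G hD)
      (fun v => gameVal G true (D ∪ closedNbhd G v)) := by
  rw [gameVal, dif_neg hD, if_neg Bool.false_ne_true]
  exact congrArg (1 + ·) (Finset.sup'_attach _ _ fun v => gameVal G true (D ∪ closedNbhd G v))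

lemma gameVal_true_le {D : Finset V} {v : V} (hv : v ∈ legalMoves G D) :
    gameVal G true D ≤ 1 + gameVal G false (D ∪ closedNbhd G v) := by
  rw [gameVal_true_of_ne_univ G (ne_univ_of_mem_legalMoves G hv)]
  exact Nat.add_le_add_left (Finset.inf'_le _ hv) 1

lemma exists_gameVal_true_eq {D : Finset V} (hD : D ≠ Finset.univ) :
    ∃ v ∈ legalMoves G D, gameVal G true D = 1 + gameVal G false (D ∪ closedNbhd G v) := by
  obtain ⟨v, hv, hmin⟩ := Finset.exists_mem_eq_inf' (legalMoves_nonempty G hD)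
    (fun v => gameVal G false (D ∪ closedNbhd G v))
  exact ⟨v, hv, by rw [gameVal_true_of_ne_univ G hD, hmin]⟩

lemma le_gameVal_false {D : Finset V} {v : V} (hv : v ∈ legalMoves G D) :
    1 + gameVal G true (D ∪ closedNbhd G v) ≤ gameVal G false D := by
  rw [gameVal_false_of_ne_univ G (ne_univ_of_mem_legalMoves G hv)]
  exact Nat.add_le_add_left (Finset.le_sup' (fun v => gameVal G true (D ∪ closedNbhd G v)) hv) 1

lemma gameVal_false_le {D : Finset V} {c : ℕ}
    (hc : ∀ v ∈ legalMoves G D, 1 + gameVal G true (D ∪ closedNbhd G v) ≤ c) :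
    gameVal G false D ≤ c := by
  by_cases hD : D = Finset.univ
  · rw [hD, gameVal_univ]
    exact Nat.zero_le c
  rw [gameVal_false_of_ne_univ G hD]
  obtain ⟨v, hv, hmax⟩ := Finset.exists_mem_eq_sup' (legalMoves_nonempty G hD)
    (fun v => gameVal G true (D ∪ closedNbhd G v))
  exact hmax ▸ hc v hv

/-- Takes antitonicity at `D` as a hypothesis so that it can serve inside the proof of
`gameVal_antitone`. -/
lemma gameVal_true_le_one_add_false_of_antitone {D : Finset V}
    (hanti : ∀ D', D ⊆ D' → gameVal G false D' ≤ gameVal G false D) :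
    gameVal G true D ≤ 1 + gameVal G false D := by
  by_cases hD : D = Finset.univ
  · rw [hD, gameVal_univ]
    exact Nat.zero_le _
  obtain ⟨w, hw⟩ := legalMoves_nonempty G hD
  calc gameVal G true D ≤ 1 + gameVal G false (D ∪ closedNbhd G w) := gameVal_true_le G hw
    _ ≤ 1 + gameVal G false D := Nat.add_le_add_left (hanti _ Finset.subset_union_left) 1

/-- The Continuation Principle. -/
theorem gameVal_antitone (t : Bool) : Antitone (gameVal G t) := by
  intro D D' hDD'
  induction D using WellFoundedGT.induction generalizing t D' with
  | ind D ih =>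
  cases t with
  | false =>
    refine gameVal_false_le G fun w hw => ?_
    have hwD : w ∈ legalMoves G D := legalMoves_anti G hDD' hw
    calc 1 + gameVal G true (D' ∪ closedNbhd G w)
        ≤ 1 + gameVal G true (D ∪ closedNbhd G w) :=
          Nat.add_le_add_left (ih _ (ssubset_union_closedNbhd G hwD) true
            (Finset.union_subset_union hDD' le_rfl)) 1
      _ ≤ gameVal G false D := le_gameVal_false G hwD
  | true =>
    by_cases hD : D = Finset.univ
    · subst hD
      rw [Finset.univ_subset_iff.1 hDD']
    obtain ⟨v, hv, hval⟩ := exists_gameVal_true_eq G hD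
    have hlt := ssubset_union_closedNbhd G hv
    rw [hval]
    by_cases hv' : v ∈ legalMoves G D'
    · calc gameVal G true D' ≤ 1 + gameVal G false (D' ∪ closedNbhd G v) := gameVal_true_le G hv'
        _ ≤ 1 + gameVal G false (D ∪ closedNbhd G v) :=
          Nat.add_le_add_left (ih _ hlt false (Finset.union_subset_union hDD' le_rfl)) 1
    · have hNv : closedNbhd G v ⊆ D' := by simpa using hv'
      calc gameVal G true D' ≤ gameVal G true (D ∪ closedNbhd G v) :=
            ih _ hlt true (Finset.union_subset hDD' hNv)
        _ ≤ 1 + gameVal G false (D ∪ closedNbhd G v) :=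
          gameVal_true_le_one_add_false_of_antitone G fun _ h => ih _ hlt false h

lemma gameVal_true_le_one_add_false (D : Finset V) :
    gameVal G true D ≤ 1 + gameVal G false D :=
  gameVal_true_le_one_add_false_of_antitone G fun _ h => gameVal_antitone G false h

lemma closedNbhd_subset_of_mem {A : Finset V} (hA : ∀ v w, G.Adj v w → (v ∈ A ↔ w ∈ A))
    {v : V} (hv : v ∈ A) : closedNbhd G v ⊆ A := by
  intro w hw
  rcases (mem_closedNbhd G).1 hw with rfl | hvw
  · exact hv
  · exact (hA v w hvw).1 hv

lemma forall_adj_iff_compl {A : Finset V} (hA : ∀ v w, G.Adj v w → (v ∈ A ↔ w ∈ A)) :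
    ∀ v w, G.Adj v w → (v ∈ Aᶜ ↔ w ∈ Aᶜ) := fun v w h => by
  simpa only [Finset.mem_compl, not_iff_not] using hA v w h

lemma mem_legalMoves_union_compl {A D : Finset V} {v : V} (hv : v ∈ legalMoves G D)
    (hvA : closedNbhd G v ⊆ A) : v ∈ legalMoves G (D ∪ Aᶜ) := by
  obtain ⟨u, hu, huD⟩ := Finset.not_subset.1 ((mem_legalMoves G).1 hv)
  exact (mem_legalMoves G).2 fun h => by simpa [huD, hvA hu] using h hu

lemma mem_of_mem_legalMoves_of_compl_subset {A E : Finset V}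
    (hA : ∀ v w, G.Adj v w → (v ∈ A ↔ w ∈ A)) (hE : Aᶜ ⊆ E) {w : V}
    (hw : w ∈ legalMoves G E) : w ∈ A := by
  by_contra hwA
  exact (mem_legalMoves G).1 hw ((closedNbhd_subset_of_mem G (forall_adj_iff_compl G hA)
    (Finset.mem_compl.2 hwA)).trans hE)

/-- The inductive step of `gameVal_false_le_of_forall_adj_iff`, for a Staller move inside `A`:
Dominator answers inside `A` as long as the game on `A` is not over. -/
lemma one_add_gameVal_true_le_of_forall_adj_iff {A D : Finset V}
    (hA : ∀ v w, G.Adj v w → (v ∈ A ↔ w ∈ A))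
    (ih : ∀ D', D ⊂ D' → ∀ m n, gameVal G false (D' ∪ Aᶜ) ≤ 2 * m →
      gameVal G false (D' ∪ A) ≤ 2 * n → gameVal G false D' ≤ 2 * (m + n))
    {m n : ℕ} (hm : gameVal G false (D ∪ Aᶜ) ≤ 2 * m) (hn : gameVal G false (D ∪ A) ≤ 2 * n)
    {v : V} (hv : v ∈ legalMoves G D) (hvA : v ∈ A) :
    1 + gameVal G true (D ∪ closedNbhd G v) ≤ 2 * (m + n) := by
  have hNv := closedNbhd_subset_of_mem G hA hvA
  have hF := le_gameVal_false G (mem_legalMoves_union_compl G hv hNv)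
  by_cases hFin : D ∪ Aᶜ ∪ closedNbhd G v = Finset.univ
  · have hsub : D ∪ A ⊆ D ∪ closedNbhd G v := fun u hu => by
      have hu' : u ∈ D ∪ Aᶜ ∪ closedNbhd G v := hFin ▸ Finset.mem_univ u
      simp only [Finset.mem_union, Finset.mem_compl] at hu hu' ⊢
      tauto
    have := gameVal_antitone G true hsub
    have := gameVal_true_le_one_add_false G (D ∪ A)
    omega
  obtain ⟨w, hw, hwval⟩ := exists_gameVal_true_eq G hFin
  have hNw := closedNbhd_subset_of_mem G hA
    (mem_of_mem_legalMoves_of_compl_subset G hA (fun u hu => by simp [hu]) hw)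
  have hwE : w ∈ legalMoves G (D ∪ closedNbhd G v) :=
    legalMoves_anti G (by intro u; simp only [Finset.mem_union]; tauto) hw
  have hrest : gameVal G false (D ∪ closedNbhd G v ∪ closedNbhd G w) ≤ 2 * (m - 1 + n) := by
    refine ih _ ((ssubset_union_closedNbhd G hv).trans_subset Finset.subset_union_left) _ _ ?_ ?_
    · have : D ∪ closedNbhd G v ∪ closedNbhd G w ∪ Aᶜ =
          D ∪ Aᶜ ∪ closedNbhd G v ∪ closedNbhd G w := by
        ext u; simp only [Finset.mem_union]; tauto
      rw [this]
      omega
    · have : D ∪ closedNbhd G v ∪ closedNbhd G w ∪ A = D ∪ A := by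
        ext u
        have := @hNv u
        have := @hNw u
        simp only [Finset.mem_union]
        tauto
      rwa [this]
  have := gameVal_true_le G hwE
  omega

/-- Dominator answers each Staller move on the same side of `A`, so on each side the moves come
in Staller–Dominator pairs, and each side costs at most its Staller-start length rounded up to
an even number. -/
theorem gameVal_false_le_of_forall_adj_iff {A : Finset V}
    (hA : ∀ v w, G.Adj v w → (v ∈ A ↔ w ∈ A)) (D : Finset V) {m n : ℕ}
    (hm : gameVal G false (D ∪ Aᶜ) ≤ 2 * m) (hn : gameVal G false (D ∪ A) ≤ 2 * n) :
    gameVal G false D ≤ 2 * (m + n) := by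
  induction D using WellFoundedGT.induction generalizing m n with
  | ind D ih =>
  refine gameVal_false_le G fun v hv => ?_
  by_cases hvA : v ∈ A
  · exact one_add_gameVal_true_le_of_forall_adj_iff G hA ih hm hn hv hvA
  · rw [add_comm m n]
    refine one_add_gameVal_true_le_of_forall_adj_iff G (forall_adj_iff_compl G hA)
      (fun D' hD' m' n' hm' hn' => ?_) (by rwa [compl_compl]) hm hv (Finset.mem_compl.2 hvA)
    rw [compl_compl] at hm'
    rw [add_comm]
    exact ih D' hD' hn' hm'

theorem gameVal_true_empty_le_of_forall_adj_iff {A : Finset V}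
    (hA : ∀ v w, G.Adj v w → (v ∈ A ↔ w ∈ A)) (v : V) {m n : ℕ}
    (hm : gameVal G false (closedNbhd G v ∪ Aᶜ) ≤ 2 * m)
    (hn : gameVal G false (closedNbhd G v ∪ A) ≤ 2 * n) :
    gameVal G true ∅ ≤ 2 * (m + n) + 1 := by
  have hopen := gameVal_true_le G (mem_legalMoves_empty G v)
  rw [Finset.empty_union] at hopen
  have := gameVal_false_le_of_forall_adj_iff G hA _ hm hn
  omega

end Game

section InducedCopy

variable {W : Type*} [Fintype W] {H : SimpleGraph V} {G : SimpleGraph W}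
  (f : H ↪g G)

/-- The position of the game on `G` in which everything outside the induced copy `f(H)` is
dominated, and inside it exactly the copy of `S`. -/
noncomputable def liftDominated (S : Finset V) : Finset W :=
  Finset.univ.filter fun w => ∀ v, f v = w → v ∈ S

variable {f}

@[simp]
lemma mem_liftDominated {S : Finset V} {w : W} :
    w ∈ liftDominated f S ↔ ∀ v, f v = w → v ∈ S := by
  simp [liftDominated]

@[simp]
lemma apply_mem_liftDominated {S : Finset V} {v : V} : f v ∈ liftDominated f S ↔ v ∈ S := by
  simp [f.injective.eq_iff]

lemma liftDominated_eq_univ [Fintype V] {S : Finset V} :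
    liftDominated f S = Finset.univ ↔ S = Finset.univ := by
  simp only [Finset.eq_univ_iff_forall, mem_liftDominated]
  exact ⟨fun h v => h (f v) v rfl, fun h _ v _ => h v⟩

lemma liftDominated_union_closedNbhd [Fintype V] (S : Finset V) (u : V) :
    liftDominated f S ∪ closedNbhd G (f u) = liftDominated f (S ∪ closedNbhd H u) := by
  ext w
  by_cases hw : ∃ v, f v = w
  · obtain ⟨v, rfl⟩ := hw
    simp [f.injective.eq_iff]
  · push Not at hw
    simp [hw]

lemma apply_mem_closedNbhd_apply [Fintype V] {u v : V} :
    f v ∈ closedNbhd G (f u) ↔ v ∈ closedNbhd H u := by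
  simp [f.injective.eq_iff]

lemma closedNbhd_apply_subset_liftDominated [Fintype V] {S : Finset V} {u : V} :
    closedNbhd G (f u) ⊆ liftDominated f S ↔ closedNbhd H u ⊆ S :=
  ⟨fun h _ hv => apply_mem_liftDominated.1 (h (apply_mem_closedNbhd_apply.2 hv)),
    fun h _ hw => mem_liftDominated.2 fun _ hv => h (apply_mem_closedNbhd_apply.1 (hv ▸ hw))⟩

lemma legalMoves_liftDominated [Fintype V] {B S : Finset V}
    (hB : ∀ w u, (∀ v, f v ≠ w) → G.Adj w (f u) → u ∈ B) (hBS : B ⊆ S) :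
    legalMoves G (liftDominated f S) = (legalMoves H S).map f.toEmbedding := by
  ext w
  simp only [mem_legalMoves, Finset.mem_map, RelEmbedding.coe_toEmbedding]
  by_cases hw : ∃ v, f v = w
  · obtain ⟨v, rfl⟩ := hw
    simp [closedNbhd_apply_subset_liftDominated, f.injective.eq_iff]
  · push Not at hw
    simp only [hw, and_false, exists_false, iff_false, not_not]
    intro w' hw'
    refine mem_liftDominated.2 fun v hv => hBS (hB w v hw ?_)
    subst hv
    rcases (mem_closedNbhd G).1 hw' with h | h
    · exact absurd h (hw v)
    · exact h

lemma mem_liftDominated_empty_iff_of_adj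
    (hf : ∀ w u, (∀ v, f v ≠ w) → ¬ G.Adj w (f u)) {w w' : W} (h : G.Adj w w') :
    w ∈ liftDominated f ∅ ↔ w' ∈ liftDominated f ∅ := by
  have key : ∀ {a b}, G.Adj a b → (∀ v, f v ≠ b) → ∀ v, f v ≠ a :=
    fun hab hb v hv => hf _ v hb (hv ▸ hab.symm)
  simpa using ⟨key h.symm, key h⟩

theorem gameVal_liftDominated [Fintype V] {B : Finset V}
    (hB : ∀ w u, (∀ v, f v ≠ w) → G.Adj w (f u) → u ∈ B) (t : Bool) {S : Finset V}
    (hBS : B ⊆ S) : gameVal G t (liftDominated f S) = gameVal H t S := by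
  induction S using WellFoundedGT.induction generalizing t with
  | ind S ih =>
  by_cases hS : S = Finset.univ
  · rw [hS, liftDominated_eq_univ.2 rfl, gameVal_univ, gameVal_univ]
  have hS' : liftDominated f S ≠ Finset.univ := fun h => hS (liftDominated_eq_univ.1 h)
  have hnext : ∀ t', ∀ u ∈ legalMoves H S,
      gameVal G t' (liftDominated f S ∪ closedNbhd G (f u)) =
        gameVal H t' (S ∪ closedNbhd H u) := fun t' u hu => by
    rw [liftDominated_union_closedNbhd]
    exact ih _ (ssubset_union_closedNbhd H hu) t' (hBS.trans Finset.subset_union_left)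
  cases t
  · rw [gameVal_false_of_ne_univ G hS', gameVal_false_of_ne_univ H hS,
      Finset.sup'_congr _ (legalMoves_liftDominated hB hBS) fun _ _ => rfl, Finset.sup'_map]
    exact congrArg (1 + ·) (Finset.sup'_congr _ rfl (hnext true))
  · rw [gameVal_true_of_ne_univ G hS', gameVal_true_of_ne_univ H hS,
      Finset.inf'_congr _ (legalMoves_liftDominated hB hBS) fun _ _ => rfl, Finset.inf'_map]
    exact congrArg (1 + ·) (Finset.inf'_congr _ rfl (hnext false))

end InducedCopy

end DominationGame

namespace Hx3

variable (H : SimpleGraph V) (x : V)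

/-- `H_{x,3} - xy`, where `y = Sum.inr 0` is the path vertex next to `x`. -/
abbrev deleteXY : SimpleGraph ((V ⊕ V) ⊕ Fin 2) :=
  (Hx3 H x).deleteEdges {s(Sum.inl (Sum.inl x), Sum.inr (0 : Fin 2))}

def firstCopy : H ↪g deleteXY H x where
  toFun u := Sum.inl (Sum.inl u)
  inj' _ _ h := by simpa using h
  map_rel_iff' {a b} := by
    show (deleteXY H x).Adj (Sum.inl (Sum.inl a)) (Sum.inl (Sum.inl b)) ↔ H.Adj a b
    simp [Hx3, H.adj_comm b a, and_iff_right_of_imp H.ne_of_adj]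

def secondCopy : H ↪g deleteXY H x where
  toFun u := Sum.inl (Sum.inr u)
  inj' _ _ h := by simpa using h
  map_rel_iff' {a b} := by
    show (deleteXY H x).Adj (Sum.inl (Sum.inr a)) (Sum.inl (Sum.inr b)) ↔ H.Adj a b
    simp [Hx3, H.adj_comm b a, and_iff_right_of_imp H.ne_of_adj]

@[simp]
lemma firstCopy_apply (u : V) : firstCopy H x u = Sum.inl (Sum.inl u) := rfl

@[simp]
lemma secondCopy_apply (u : V) : secondCopy H x u = Sum.inl (Sum.inr u) := rfl

variable {H x}

open DominationGame

lemma not_adj_firstCopy (w : (V ⊕ V) ⊕ Fin 2) (u : V) (hw : ∀ v, firstCopy H x v ≠ w) :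
    ¬ (deleteXY H x).Adj w (firstCopy H x u) := by
  rcases w with (v | v) | i <;> simp_all +contextual [Hx3]

lemma mem_of_adj_secondCopy (w : (V ⊕ V) ⊕ Fin 2) (u : V) (hw : ∀ v, secondCopy H x v ≠ w)
    (h : (deleteXY H x).Adj w (secondCopy H x u)) : u ∈ ({x} : Finset V) := by
  rcases w with (v | v) | i <;> simp_all [Hx3]

lemma liftDominated_secondCopy_subset [Fintype V] :
    liftDominated (secondCopy H x) {x} ⊆
      closedNbhd (deleteXY H x) (Sum.inr 1) ∪ (liftDominated (firstCopy H x) ∅)ᶜ := by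
  intro w hw
  rcases w with (v | v) | i
  · simp
  · simp_all [Hx3]
  · fin_cases i <;> simp [Hx3]

end Hx3

open DominationGame Hx3 in
theorem stmt17_general {V : Type*} [Fintype V] (H : SimpleGraph V) (x : V) (k : ℕ)
    (hke : Even k)
    (h3 : gammaG' H {x} = k) (h4 : gammaG' H ∅ = k) :
    gammaG ((Hx3 H x).deleteEdges
      {s(Sum.inl (Sum.inl x), Sum.inr (0 : Fin 2))}) ∅ ≤ 2 * k + 1 := by
  obtain ⟨m, rfl⟩ := hke
  rw [← two_mul] at h3 h4
  have hA : ∀ v w, (deleteXY H x).Adj v w →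
      (v ∈ liftDominated (firstCopy H x) ∅ ↔ w ∈ liftDominated (firstCopy H x) ∅) :=
    fun _ _ => mem_liftDominated_empty_iff_of_adj not_adj_firstCopy
  refine gameVal_true_empty_le_of_forall_adj_iff _ hA (Sum.inr 1) ?_ ?_
  -- The set operations below come with the classical `DecidableEq` instance of the vertex type,
  -- not with `instDecidableEqSum`; hence `convert` and `simp` rather than direct terms.
  · exact (gameVal_antitone _ false (by convert liftDominated_secondCopy_subset)).trans
      ((gameVal_liftDominated mem_of_adj_secondCopy false le_rfl).trans h3).le
  · exact (gameVal_antitone _ false fun w hw => by simp [hw]).trans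
      ((gameVal_liftDominated (B := ∅) (fun w u hw h => (not_adj_firstCopy w u hw h).elim) false
        le_rfl).trans h4).le

/-- Under the double-Staller hypotheses on `H` and `x`, Dominator has a strategy in the
Dominator-start game on `G - e` (where `G = H_{x,3}` and `e = xy`) guaranteeing that the
game ends in at most `2k + 1` moves, i.e. `γ_g(G - e) ≤ 2k + 1`. -/
theorem stmt17 {V : Type*} [Fintype V] (H : SimpleGraph V) (x : V) (k : ℕ)
    (hk : 0 < k) (hke : Even k) (hds : IsDoubleStaller H)
    (h1 : gammaG H {x} = k + 1) (h2 : gammaG H ∅ = k + 1)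
    (h3 : gammaG' H {x} = k) (h4 : gammaG' H ∅ = k) :
    gammaG ((Hx3 H x).deleteEdges
      {s(Sum.inl (Sum.inl x), Sum.inr (0 : Fin 2))}) ∅ ≤ 2 * k + 1 :=
  stmt17_general H x k hke h3 h4
end
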